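/- Let ψ : ℝ^{α+2} → ℝ and φ : ℝ^{β+2} → ℝ be c-Lipschitz for the sup metric, t > 1, M ≥ 1, and let f¹, f² both be (t,M)-close to ψ and g¹, g² both be (t,M)-close to φ. For l = 1, 2 let (F^l(i,j), G^l(i,j)) be the rational state system for (f^l, g^l) with positive initial data (z_i(1))_i, (w^j(1))_j. Suppose positive double sequences (z(i,j)), (w(i,j)) satisfy z(i,0) = z_i(2), w(0,j) = w^j(2) and the dynamical inequalities f¹(w(i,j), z(i,j), …, z(i+α,j)) ≤ z(i,j+1) ≤ f²(w(i,j), z(i,j), …, z(i+α,j)) and g¹(w(i,j), z(i,j), …, z(i+β,j)) ≤ w(i+1,j) ≤ g²(w(i,j), z(i,j), …, z(i+β,j)), where ρ ≥ 1 satisfies (z_i(1)/z_i(2))^{±1} ≤ ρ and (w^j(1)/w^j(2))^{±1} ≤ ρ for all i, j. Then for l = 1, 2 and all i, j: max(F^l(i,j+1)/z(i,j+1), z(i,j+1)/F^l(i,j+1)) ≤ M^{4·P_{i+j(γ+1)}(c)} · ρ^{c̃^{i+1+j(γ+1)}} and max(G^l(i+1,j)/w(i+1,j), w(i+1,j)/G^l(i+1,j))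 ≤ M^{4·P_{i+j(γ+1)}(c)} · ρ^{c̃^{i+1+j(γ+1)}}. -/

import Mathlib

/-!
In base-`t` logarithmic coordinates, the rational state systems and, thanks to the sandwich,
also `(z, w)` solve the recursion driven by the `c`-Lipschitz maps `ψ`, `φ` up to an error
`μ = log_t M`. Two such approximate solutions whose inputs differ by at most `e` produce
outputs differing by at most `2μ + c e`. The entries `z(i, j+1)` and `w(i+1, j)` only depend on
entries of strictly smaller index `i + j(γ+1)`, so induction on this index gives the bound
`2μ P_{n-1}(c) + c̃ⁿ log_t ρ` at index `n`.
-/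

open Real Finset

/-- The paper's notion "`f` is `(t, M)`-close to `ψ`", tested on positive arguments. -/
def IsLogClose (t M : ℝ) {N : ℕ} (f ψ : (Fin N → ℝ) → ℝ) : Prop :=
  ∀ v : Fin N → ℝ, (∀ k, 0 < v k) → |logb t (f v) - ψ (fun k => logb t (v k))| ≤ logb t M

/-- The argument `(W(i,j), Z(i,j), …, Z(i+n,j))` of the update maps. -/
def stateInput (n : ℕ) (Z W : ℕ → ℕ → ℝ) (i j : ℕ) : Fin (n + 2) → ℝ :=
  Fin.cons (W i j) fun k : Fin (n + 1) => Z (i + (k : ℕ)) j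

def IsApproxSolution (α β : ℕ) (ψ : (Fin (α + 2) → ℝ) → ℝ) (φ : (Fin (β + 2) → ℝ) → ℝ)
    (μ : ℝ) (Z W : ℕ → ℕ → ℝ) : Prop :=
  ∀ i j, |Z i (j + 1) - ψ (stateInput α Z W i j)| ≤ μ ∧
    |W (i + 1) j - φ (stateInput β Z W i j)| ≤ μ

section StateInput

variable {n : ℕ} {Z W Z' W' : ℕ → ℕ → ℝ} {i j : ℕ}

lemma stateInput_pos (hW : 0 < W i j) (hZ : ∀ i', 0 < Z i' j) (k : Fin (n + 2)) :
    0 < stateInput n Z W i j k := by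
  cases k using Fin.cases with
  | zero => exact hW
  | succ k => exact hZ _

lemma logb_stateInput (t : ℝ) :
    (fun k => logb t (stateInput n Z W i j k)) =
      stateInput n (fun i j => logb t (Z i j)) (fun i j => logb t (W i j)) i j :=
  Fin.comp_cons (logb t) (W i j) fun k : Fin (n + 1) => Z (i + (k : ℕ)) j

lemma dist_stateInput_le {D : ℝ} (hW : |W i j - W' i j| ≤ D)
    (hZ : ∀ k ≤ n, |Z (i + k) j - Z' (i + k) j| ≤ D) :
    dist (stateInput n Z W i j) (stateInput n Z' W' i j) ≤ D := by
  refine (dist_pi_le_iff ((abs_nonneg _).trans hW)).2 fun k => ?_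
  cases k using Fin.cases with
  | zero => exact hW
  | succ k => exact hZ k (Nat.lt_succ_iff.1 k.isLt)

end StateInput

lemma max_div_div_le_iff_abs_logb_sub_le {b x y R : ℝ} (hb : 1 < b) (hx : 0 < x) (hy : 0 < y)
    (hR : 0 < R) : max (x / y) (y / x) ≤ R ↔ |logb b x - logb b y| ≤ logb b R := by
  rw [max_le_iff, abs_sub_le_iff, ← logb_div hx.ne' hy.ne', ← logb_div hy.ne' hx.ne',
    logb_le_logb hb (div_pos hx hy) hR, logb_le_logb hb (div_pos hy hx) hR]

lemma abs_sub_logb_le_of_le_of_le {t M : ℝ} {N : ℕ} {ψ f₁ f₂ : (Fin N → ℝ) → ℝ}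
    (ht : 1 < t) (hf₁ : IsLogClose t M f₁ ψ) (hf₂ : IsLogClose t M f₂ ψ)
    (hf₁pos : ∀ v, (∀ k, 0 < v k) → 0 < f₁ v) {v : Fin N → ℝ} (hv : ∀ k, 0 < v k) {x : ℝ}
    (hlow : f₁ v ≤ x) (hhigh : x ≤ f₂ v) :
    |logb t x - ψ (fun k => logb t (v k))| ≤ logb t M := by
  have hx : 0 < x := (hf₁pos v hv).trans_le hlow
  have h₁ := logb_le_logb_of_le ht (hf₁pos v hv) hlow
  have h₂ := logb_le_logb_of_le ht hx hhigh
  obtain ⟨h₁l, -⟩ := abs_le.1 (hf₁ v hv)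
  obtain ⟨-, h₂r⟩ := abs_le.1 (hf₂ v hv)
  rw [abs_le]
  constructor <;> linarith

lemma abs_sub_le_of_lipschitz {N : ℕ} {ψ : (Fin N → ℝ) → ℝ} {c μ D x y : ℝ}
    {u u' : Fin N → ℝ} (hc : 0 ≤ c) (hψ : ∀ v w, |ψ v - ψ w| ≤ c * dist v w)
    (hx : |x - ψ u| ≤ μ) (hy : |y - ψ u'| ≤ μ) (hD : dist u u' ≤ D) :
    |x - y| ≤ 2 * μ + c * D := by
  have hψD := (hψ u u').trans (mul_le_mul_of_nonneg_left hD hc)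
  rw [abs_le] at *
  constructor <;> linarith

noncomputable def errorBound (μ c r : ℝ) (n : ℕ) : ℝ :=
  2 * μ * ∑ k ∈ range n, c ^ k + max c 1 ^ n * r

section ErrorBound

variable {μ c r : ℝ}

@[simp]
lemma errorBound_zero : errorBound μ c r 0 = r := by
  simp [errorBound]

lemma le_errorBound (hμ : 0 ≤ μ) (hc : 0 ≤ c) (hr : 0 ≤ r) (n : ℕ) : r ≤ errorBound μ c r n := by
  have hsum : 0 ≤ ∑ k ∈ range n, c ^ k := sum_nonneg fun k _ => pow_nonneg hc k
  have hpow : r ≤ max c 1 ^ n * r := le_mul_of_one_le_left hr (one_le_pow₀ (le_max_right c 1))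
  unfold errorBound
  nlinarith

lemma two_mul_add_mul_errorBound_le (hr : 0 ≤ r) (n : ℕ) :
    2 * μ + c * errorBound μ c r n ≤ errorBound μ c r (n + 1) := by
  have hpow : c * (max c 1 ^ n * r) ≤ max c 1 ^ (n + 1) * r := by
    rw [pow_succ', mul_assoc]
    exact mul_le_mul_of_nonneg_right (le_max_left c 1) (by positivity)
  unfold errorBound
  rw [geom_sum_succ]
  linarith

lemma errorBound_le_logb {t M ρ : ℝ} (ht : 1 < t) (hM : 1 ≤ M) (hρ : 1 ≤ ρ) (hc : 0 ≤ c)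
    (n : ℕ) :
    errorBound (logb t M) c (logb t ρ) n ≤
      logb t (M ^ (4 * ∑ k ∈ range n, c ^ k) * ρ ^ (max c 1 ^ n)) := by
  have hM0 : 0 < M := one_pos.trans_le hM
  have hρ0 : 0 < ρ := one_pos.trans_le hρ
  have hsum : 0 ≤ ∑ k ∈ range n, c ^ k := sum_nonneg fun k _ => pow_nonneg hc k
  have hlogM : 0 ≤ logb t M := logb_nonneg ht hM
  rw [logb_mul (rpow_pos_of_pos hM0 _).ne' (rpow_pos_of_pos hρ0 _).ne',
    logb_rpow_eq_mul_logb_of_pos hM0, logb_rpow_eq_mul_logb_of_pos hρ0, errorBound]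
  nlinarith

end ErrorBound

/-- Errors propagate along the grid: the entries `z(i, j+1)` and `w(i+1, j)` are computed from
`w(i, j)` and `z(i, j), …, z(i+γ, j)`, all of which have index `i + j(γ+1)` strictly smaller. -/
lemma grid_induction {γ : ℕ} {ez ew : ℕ → ℕ → ℝ} {b : ℕ → ℝ}
    (hz₀ : ∀ i, ez i 0 ≤ b 0) (hw₀ : ∀ j, ew 0 j ≤ b 0) (hb₀ : ∀ n, b 0 ≤ b n)
    (hstep : ∀ n i j, ew i j ≤ b n → (∀ k ≤ γ, ez (i + k) j ≤ b n) →
      ez i (j + 1) ≤ b (n + 1) ∧ ew (i + 1) j ≤ b (n + 1))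
    (i j : ℕ) :
    ez i (j + 1) ≤ b (i + j * (γ + 1) + 1) ∧ ew (i + 1) j ≤ b (i + j * (γ + 1) + 1) := by
  suffices key : ∀ n i j, i + j * (γ + 1) < n →
      ez i (j + 1) ≤ b n ∧ ew (i + 1) j ≤ b n from
    key _ i j (Nat.lt_succ_self _)
  intro n
  induction n with
  | zero => intro i j h; omega
  | succ n ih =>
    intro i j hij
    apply hstep
    · cases i with
      | zero => exact (hw₀ j).trans (hb₀ n)
      | succ i => exact (ih i j (by omega)).2
    · intro k hk
      cases j with
      | zero => exact (hz₀ _).trans (hb₀ n)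
      | succ j => exact (ih (i + k) j (by rw [Nat.succ_mul] at hij; omega)).1

theorem IsApproxSolution.abs_sub_le {α β : ℕ} {ψ : (Fin (α + 2) → ℝ) → ℝ}
    {φ : (Fin (β + 2) → ℝ) → ℝ} {c μ r : ℝ} {Z W Z' W' : ℕ → ℕ → ℝ}
    (hc : 0 ≤ c) (hψ : ∀ v w, |ψ v - ψ w| ≤ c * dist v w)
    (hφ : ∀ v w, |φ v - φ w| ≤ c * dist v w) (hμ : 0 ≤ μ) (hr : 0 ≤ r)
    (h : IsApproxSolution α β ψ φ μ Z W) (h' : IsApproxSolution α β ψ φ μ Z' W')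
    (hZ₀ : ∀ i, |Z i 0 - Z' i 0| ≤ r) (hW₀ : ∀ j, |W 0 j - W' 0 j| ≤ r) (i j : ℕ) :
    |Z i (j + 1) - Z' i (j + 1)| ≤ errorBound μ c r (i + j * (max α β + 1) + 1) ∧
      |W (i + 1) j - W' (i + 1) j| ≤ errorBound μ c r (i + j * (max α β + 1) + 1) := by
  refine grid_induction (ez := fun i j => |Z i j - Z' i j|) (ew := fun i j => |W i j - W' i j|)
    (b := errorBound μ c r) (fun i => (hZ₀ i).trans_eq errorBound_zero.symm)
    (fun j => (hW₀ j).trans_eq errorBound_zero.symm)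
    (fun n => errorBound_zero.trans_le (le_errorBound hμ hc hr n)) ?_ i j
  intro n i j hW hZ
  have hnext := two_mul_add_mul_errorBound_le (μ := μ) (c := c) hr n
  exact ⟨(abs_sub_le_of_lipschitz hc hψ (h i j).1 (h' i j).1 (dist_stateInput_le hW
      fun k hk => hZ k (hk.trans (le_max_left α β)))).trans hnext,
    (abs_sub_le_of_lipschitz hc hφ (h i j).2 (h' i j).2 (dist_stateInput_le hW
      fun k hk => hZ k (hk.trans (le_max_right α β)))).trans hnext⟩

section StateSystem

variable {α β : ℕ} {f : (Fin (α + 2) → ℝ) → ℝ} {g : (Fin (β + 2) → ℝ) → ℝ}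
  {F G : ℕ → ℕ → ℝ}

lemma stateSystem_pos (hf : ∀ v, (∀ k, 0 < v k) → 0 < f v) (hg : ∀ v, (∀ k, 0 < v k) → 0 < g v)
    (hF₀ : ∀ i, 0 < F i 0) (hG₀ : ∀ j, 0 < G 0 j)
    (hF : ∀ i j, F i (j + 1) = f (stateInput α F G i j))
    (hG : ∀ i j, G (i + 1) j = g (stateInput β F G i j)) (i j : ℕ) :
    0 < F i j ∧ 0 < G i j := by
  suffices key : ∀ j, (∀ i, 0 < F i j) ∧ ∀ i, 0 < G i j from ⟨(key j).1 i, (key j).2 i⟩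
  have hGrow : ∀ j, (∀ i, 0 < F i j) → ∀ i, 0 < G i j := by
    intro j hFj i
    induction i with
    | zero => exact hG₀ j
    | succ i ih => rw [hG]; exact hg _ (stateInput_pos ih hFj)
  intro j
  induction j with
  | zero => exact ⟨hF₀, hGrow 0 hF₀⟩
  | succ j ih =>
    have hFj : ∀ i, 0 < F i (j + 1) := fun i => by
      rw [hF]; exact hf _ (stateInput_pos (ih.2 i) ih.1)
    exact ⟨hFj, hGrow _ hFj⟩

lemma isApproxSolution_of_stateSystem {t M : ℝ} {ψ : (Fin (α + 2) → ℝ) → ℝ}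
    {φ : (Fin (β + 2) → ℝ) → ℝ} (hf : IsLogClose t M f ψ) (hg : IsLogClose t M g φ)
    (hpos : ∀ i j, 0 < F i j ∧ 0 < G i j)
    (hF : ∀ i j, F i (j + 1) = f (stateInput α F G i j))
    (hG : ∀ i j, G (i + 1) j = g (stateInput β F G i j)) :
    IsApproxSolution α β ψ φ (logb t M) (fun i j => logb t (F i j))
      (fun i j => logb t (G i j)) := by
  intro i j
  have hv : ∀ {n} (k : Fin (n + 2)), 0 < stateInput n F G i j k :=
    stateInput_pos (hpos i j).2 fun i' => (hpos i' j).1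
  dsimp only
  rw [← logb_stateInput, ← logb_stateInput, hF, hG]
  exact ⟨hf _ hv, hg _ hv⟩

end StateSystem

lemma isApproxSolution_of_le_of_le {α β : ℕ} {t M : ℝ} (ht : 1 < t)
    {ψ f₁ f₂ : (Fin (α + 2) → ℝ) → ℝ} {φ g₁ g₂ : (Fin (β + 2) → ℝ) → ℝ}
    (hf₁ : IsLogClose t M f₁ ψ) (hf₂ : IsLogClose t M f₂ ψ)
    (hg₁ : IsLogClose t M g₁ φ) (hg₂ : IsLogClose t M g₂ φ)
    (hf₁pos : ∀ v, (∀ k, 0 < v k) → 0 < f₁ v) (hg₁pos : ∀ v, (∀ k, 0 < v k) → 0 < g₁ v)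
    {z w : ℕ → ℕ → ℝ} (hzpos : ∀ i j, 0 < z i j) (hwpos : ∀ i j, 0 < w i j)
    (hzlow : ∀ i j, f₁ (stateInput α z w i j) ≤ z i (j + 1))
    (hzhigh : ∀ i j, z i (j + 1) ≤ f₂ (stateInput α z w i j))
    (hwlow : ∀ i j, g₁ (stateInput β z w i j) ≤ w (i + 1) j)
    (hwhigh : ∀ i j, w (i + 1) j ≤ g₂ (stateInput β z w i j)) :
    IsApproxSolution α β ψ φ (logb t M) (fun i j => logb t (z i j))
      (fun i j => logb t (w i j)) := by
  intro i j
  have hv : ∀ {n} (k : Fin (n + 2)), 0 < stateInput n z w i j k :=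
    stateInput_pos (hwpos i j) fun i' => hzpos i' j
  rw [← logb_stateInput, ← logb_stateInput]
  exact ⟨abs_sub_logb_le_of_le_of_le ht hf₁ hf₂ hf₁pos hv (hzlow i j) (hzhigh i j),
    abs_sub_logb_le_of_le_of_le ht hg₁ hg₂ hg₁pos hv (hwlow i j) (hwhigh i j)⟩

/-- dynamical inequalities with different initial data. If positive
sequences `(z, w)` satisfy the dynamical inequalities between `(f¹, g¹)` and `(f², g²)`
— all `(t,M)`-close to the same `c`-Lipschitz pair `(ψ, φ)` — with initial data at
ratio at most `ρ` from that of the rational state systems `(F^l, G^l)`, then the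
ratios are bounded by `M^{4 P_{i+j(γ+1)}(c)} · ρ^{c̃^{i+1+j(γ+1)}}`. -/
theorem statement11 (α β : ℕ) (c t M : ℝ) (hc : 0 ≤ c) (ht : 1 < t) (hM : 1 ≤ M)
    (ψ : (Fin (α + 2) → ℝ) → ℝ) (φ : (Fin (β + 2) → ℝ) → ℝ)
    (hψ : ∀ v w : Fin (α + 2) → ℝ, |ψ v - ψ w| ≤ c * dist v w)
    (hφ : ∀ v w : Fin (β + 2) → ℝ, |φ v - φ w| ≤ c * dist v w)
    (f1 f2 : (Fin (α + 2) → ℝ) → ℝ) (g1 g2 : (Fin (β + 2) → ℝ) → ℝ)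
    (hf1pos : ∀ v : Fin (α + 2) → ℝ, (∀ k, 0 < v k) → 0 < f1 v)
    (hf2pos : ∀ v : Fin (α + 2) → ℝ, (∀ k, 0 < v k) → 0 < f2 v)
    (hg1pos : ∀ v : Fin (β + 2) → ℝ, (∀ k, 0 < v k) → 0 < g1 v)
    (hg2pos : ∀ v : Fin (β + 2) → ℝ, (∀ k, 0 < v k) → 0 < g2 v)
    (hf1 : ∀ v : Fin (α + 2) → ℝ, (∀ k, 0 < v k) →
      |Real.log (f1 v) / Real.log t - ψ (fun k => Real.log (v k) / Real.log t)|
        ≤ Real.log M / Real.log t)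
    (hf2 : ∀ v : Fin (α + 2) → ℝ, (∀ k, 0 < v k) →
      |Real.log (f2 v) / Real.log t - ψ (fun k => Real.log (v k) / Real.log t)|
        ≤ Real.log M / Real.log t)
    (hg1 : ∀ v : Fin (β + 2) → ℝ, (∀ k, 0 < v k) →
      |Real.log (g1 v) / Real.log t - φ (fun k => Real.log (v k) / Real.log t)|
        ≤ Real.log M / Real.log t)
    (hg2 : ∀ v : Fin (β + 2) → ℝ, (∀ k, 0 < v k) →
      |Real.log (g2 v) / Real.log t - φ (fun k => Real.log (v k) / Real.log t)|
        ≤ Real.log M / Real.log t)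
    (z01 w01 z02 w02 : ℕ → ℝ)
    (hz01 : ∀ i, 0 < z01 i) (hw01 : ∀ j, 0 < w01 j)
    (hz02 : ∀ i, 0 < z02 i) (hw02 : ∀ j, 0 < w02 j)
    (F1 G1 F2 G2 : ℕ → ℕ → ℝ)
    (hF10 : ∀ i, F1 i 0 = z01 i) (hG10 : ∀ j, G1 0 j = w01 j)
    (hF1 : ∀ i j, F1 i (j + 1) = f1 (Fin.cons (G1 i j) (fun k : Fin (α + 1) => F1 (i + (k : ℕ)) j)))
    (hG1 : ∀ i j, G1 (i + 1) j = g1 (Fin.cons (G1 i j) (fun k : Fin (β + 1) => F1 (i + (k : ℕ)) j)))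
    (hF20 : ∀ i, F2 i 0 = z01 i) (hG20 : ∀ j, G2 0 j = w01 j)
    (hF2 : ∀ i j, F2 i (j + 1) = f2 (Fin.cons (G2 i j) (fun k : Fin (α + 1) => F2 (i + (k : ℕ)) j)))
    (hG2 : ∀ i j, G2 (i + 1) j = g2 (Fin.cons (G2 i j) (fun k : Fin (β + 1) => F2 (i + (k : ℕ)) j)))
    (z w : ℕ → ℕ → ℝ) (hzpos : ∀ i j, 0 < z i j) (hwpos : ∀ i j, 0 < w i j)
    (hz0' : ∀ i, z i 0 = z02 i) (hw0' : ∀ j, w 0 j = w02 j)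
    (hzlow : ∀ i j, f1 (Fin.cons (w i j) (fun k : Fin (α + 1) => z (i + (k : ℕ)) j)) ≤ z i (j + 1))
    (hzhigh : ∀ i j, z i (j + 1) ≤ f2 (Fin.cons (w i j) (fun k : Fin (α + 1) => z (i + (k : ℕ)) j)))
    (hwlow : ∀ i j, g1 (Fin.cons (w i j) (fun k : Fin (β + 1) => z (i + (k : ℕ)) j)) ≤ w (i + 1) j)
    (hwhigh : ∀ i j, w (i + 1) j ≤ g2 (Fin.cons (w i j) (fun k : Fin (β + 1) => z (i + (k : ℕ)) j)))
    (ρ : ℝ) (hρ : 1 ≤ ρ)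
    (hρz : ∀ i, z01 i / z02 i ≤ ρ ∧ z02 i / z01 i ≤ ρ)
    (hρw : ∀ j, w01 j / w02 j ≤ ρ ∧ w02 j / w01 j ≤ ρ) :
    ∀ i j : ℕ,
      max (F1 i (j + 1) / z i (j + 1)) (z i (j + 1) / F1 i (j + 1))
        ≤ M ^ (4 * ∑ k ∈ Finset.range (i + j * (max α β + 1) + 1), c ^ k)
          * ρ ^ ((max c 1) ^ (i + 1 + j * (max α β + 1))) ∧
      max (F2 i (j + 1) / z i (j + 1)) (z i (j + 1) / F2 i (j + 1))
        ≤ M ^ (4 * ∑ k ∈ Finset.range (i + j * (max α β + 1) + 1), c ^ k)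
          * ρ ^ ((max c 1) ^ (i + 1 + j * (max α β + 1))) ∧
      max (G1 (i + 1) j / w (i + 1) j) (w (i + 1) j / G1 (i + 1) j)
        ≤ M ^ (4 * ∑ k ∈ Finset.range (i + j * (max α β + 1) + 1), c ^ k)
          * ρ ^ ((max c 1) ^ (i + 1 + j * (max α β + 1))) ∧
      max (G2 (i + 1) j / w (i + 1) j) (w (i + 1) j / G2 (i + 1) j)
        ≤ M ^ (4 * ∑ k ∈ Finset.range (i + j * (max α β + 1) + 1), c ^ k)
          * ρ ^ ((max c 1) ^ (i + 1 + j * (max α β + 1))) := by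
  intro i j
  have hρ0 : 0 < ρ := one_pos.trans_le hρ
  have hlogM : 0 ≤ logb t M := logb_nonneg ht hM
  have hlogρ : 0 ≤ logb t ρ := logb_nonneg ht hρ
  have hpos₁ := stateSystem_pos hf1pos hg1pos (fun i => hF10 i ▸ hz01 i)
    (fun j => hG10 j ▸ hw01 j) hF1 hG1
  have hpos₂ := stateSystem_pos hf2pos hg2pos (fun i => hF20 i ▸ hz01 i)
    (fun j => hG20 j ▸ hw01 j) hF2 hG2
  have hzw := isApproxSolution_of_le_of_le ht hf1 hf2 hg1 hg2 hf1pos hg1pos hzpos hwpos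
    hzlow hzhigh hwlow hwhigh
  have hz₀ : ∀ i, |logb t (z01 i) - logb t (z02 i)| ≤ logb t ρ := fun i =>
    (max_div_div_le_iff_abs_logb_sub_le ht (hz01 i) (hz02 i) hρ0).1 (max_le_iff.2 (hρz i))
  have hw₀ : ∀ j, |logb t (w01 j) - logb t (w02 j)| ≤ logb t ρ := fun j =>
    (max_div_div_le_iff_abs_logb_sub_le ht (hw01 j) (hw02 j) hρ0).1 (max_le_iff.2 (hρw j))
  obtain ⟨hFz₁, hGw₁⟩ := (isApproxSolution_of_stateSystem hf1 hg1 hpos₁ hF1 hG1).abs_sub_le hc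
    hψ hφ hlogM hlogρ hzw (by simpa [hF10, hz0'] using hz₀) (by simpa [hG10, hw0'] using hw₀) i j
  obtain ⟨hFz₂, hGw₂⟩ := (isApproxSolution_of_stateSystem hf2 hg2 hpos₂ hF2 hG2).abs_sub_le hc
    hψ hφ hlogM hlogρ hzw (by simpa [hF20, hz0'] using hz₀) (by simpa [hG20, hw0'] using hw₀) i j
  rw [show i + 1 + j * (max α β + 1) = i + j * (max α β + 1) + 1 by ring]
  set n := i + j * (max α β + 1) + 1
  have hR := mul_pos (rpow_pos_of_pos (one_pos.trans_le hM) (4 * ∑ k ∈ range n, c ^ k))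
    (rpow_pos_of_pos hρ0 (max c 1 ^ n))
  have hratio : ∀ {x y : ℝ}, 0 < x → 0 < y →
      |logb t x - logb t y| ≤ errorBound (logb t M) c (logb t ρ) n →
      max (x / y) (y / x) ≤ M ^ (4 * ∑ k ∈ range n, c ^ k) * ρ ^ (max c 1 ^ n) :=
    fun hx hy h => (max_div_div_le_iff_abs_logb_sub_le ht hx hy hR).2
      (h.trans (errorBound_le_logb ht hM hρ hc n))
  exact ⟨hratio (hpos₁ i (j + 1)).1 (hzpos i (j + 1)) hFz₁,
    hratio (hpos₂ i (j + 1)).1 (hzpos i (j + 1)) hFz₂,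
    hratio (hpos₁ (i + 1) j).2 (hwpos (i + 1) j) hGw₁,
    hratio (hpos₂ (i + 1) j).2 (hwpos (i + 1) j) hGw₂⟩
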